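/- If σ_∃ is a remorsefree-admissible strategy for L, then IA(σ_∃) = { w | π_I(w) ∉ π_I(Out(σ_∃) \ L) } is an optimal input assumption for L: it is an input assumption sufficient for σ_∃, and no input assumption sufficient for L strictly contains it. Conversely, if A is an optimal input assumption for L, then A = IA(σ_∃) for some remorsefree-admissible strategy σ_∃. -/
import Mathlib


open scoped Classical

universe u v

variable {I : Type u} {O : Type v}

/-- The finite (even) history consisting of the first `n` (input, output) pairs of a word.
A word in `(Σ_I · Σ_O)^ω` is modelled as `w : ℕ → I × O`, where round `n` consists of the
input letter `(w n).1` followed by the output letter `(w n).2`. -/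
def wpref (w : ℕ → I × O) (n : ℕ) : List (I × O) := (List.range n).map w

/-- Outcomes of a controller strategy `σ : (Σ_I·Σ_O)^*·Σ_I → Σ_O`. -/
def OutC (σ : List (I × O) → I → O) : Set (ℕ → I × O) :=
  {w | ∀ n, (w n).2 = σ (wpref w n) (w n).1}

/-- Outcomes of an environment strategy `τ : (Σ_I·Σ_O)^* → Σ_I`. -/
def OutE (τ : List (I × O) → I) : Set (ℕ → I × O) :=
  {w | ∀ n, (w n).1 = τ (wpref w n)}

/-- Input projection `π_I`. -/
def inputProj (w : ℕ → I × O) : ℕ → I := fun n => (w n).1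

/-- `A` is an input assumption: closed under changing output letters. -/
def IsInputAssumption (A : Set (ℕ → I × O)) : Prop :=
  ∀ w w' : ℕ → I × O, inputProj w = inputProj w' → w ∈ A → w' ∈ A

/-- Cylinder `h·(Σ_I·Σ_O)^ω` of an even history `h`. -/
def cylE (h : List (I × O)) : Set (ℕ → I × O) := {w | wpref w h.length = h}

/-- Cylinder of a general history: an even part plus possibly a pending input letter. -/
def cylH (h : List (I × O) × Option I) : Set (ℕ → I × O) :=
  {w | wpref w h.1.length = h.1 ∧ ∀ i, h.2 = some i → (w h.1.length).1 = i}

/-- A scenario is coherent: no history is a prefix of two words of `S`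
that agree on the next input but disagree on the next output. -/
def Coherent (S : Set (ℕ → I × O)) : Prop :=
  ∀ w ∈ S, ∀ w' ∈ S, ∀ n, wpref w n = wpref w' n → (w n).1 = (w' n).1 → (w n).2 = (w' n).2

/-- The strategy `[S → σ]`: follow a word of the scenario `S` extending the current
history if one exists, and otherwise play `σ`. -/
noncomputable def shiftStrat (S : Set (ℕ → I × O))
    (σ : List (I × O) → I → O) : List (I × O) → I → O := fun h i =>
  if hex : ∃ w, w ∈ S ∧ wpref w h.length = h ∧ (w h.length).1 = i
  then (hex.choose h.length).2
  else σ h i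

/-- `EA(σ) = L ∪ ((Σ_I·Σ_O)^ω \ Out(σ))`. -/
def EA (L : Set (ℕ → I × O)) (σ : List (I × O) → I → O) : Set (ℕ → I × O) :=
  L ∪ (OutC σ)ᶜ

/-- The words doomed for `σ`: some even-length prefix extends to an outcome of `σ`,
but no outcome of `σ` extending that prefix is in `L`. -/
def Doomed (L : Set (ℕ → I × O)) (σ : List (I × O) → I → O) : Set (ℕ → I × O) :=
  {w | ∃ k, (OutC σ ∩ cylE (wpref w k)).Nonempty ∧ OutC σ ∩ cylE (wpref w k) ∩ L = ∅}

/-- `EA⁻(σ) = EA(σ) \ Doomed(σ)`. -/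
def EAminus (L : Set (ℕ → I × O)) (σ : List (I × O) → I → O) : Set (ℕ → I × O) :=
  EA L σ \ Doomed L σ

/-- `A` is sufficient for the specification `L` (for some controller strategy). -/
def Sufficient (L A : Set (ℕ → I × O)) : Prop :=
  ∃ σ : List (I × O) → I → O, OutC σ ∩ A ⊆ L

/-- `A` is output-restrictive. -/
def OutputRestrictive (A : Set (ℕ → I × O)) : Prop :=
  ∃ (h : List (I × O)) (σ : List (I × O) → I → O),
    (A ∩ cylE h).Nonempty ∧ (OutC σ ∩ cylE h).Nonempty ∧ A ∩ OutC σ ∩ cylE h = ∅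

/-- The even history of length `n` produced jointly by controller `σ` and environment `τ`. -/
def playH (σ : List (I × O) → I → O) (τ : List (I × O) → I) : ℕ → List (I × O)
  | 0 => []
  | n+1 =>
      let g := playH σ τ n
      g ++ [(τ g, σ g (τ g))]

/-- The unique joint outcome `Out(σ, τ)`. -/
def play (σ : List (I × O) → I → O) (τ : List (I × O) → I) : ℕ → I × O := fun n =>
  let g := playH σ τ n
  (τ g, σ g (τ g))

/-- History construction when the controller follows `σ` against the fixed input word `u`. -/
def playIH (σ : List (I × O) → I → O) (u : ℕ → I) : ℕ → List (I × O)
  | 0 => []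
  | n+1 =>
      let g := playIH σ u n
      g ++ [(u n, σ g (u n))]

/-- The unique outcome `Out(σ, u)` of `σ` against the input word `u`. -/
def playI (σ : List (I × O) → I → O) (u : ℕ → I) : ℕ → I × O := fun n =>
  (u n, σ (playIH σ u n) (u n))

/-- Outcomes extending the history `h` and following `σ` afterwards, `Out_h(σ)`. -/
def OutFrom (σ : List (I × O) → I → O) (h : List (I × O) × Option I) :
    Set (ℕ → I × O) :=
  {w | wpref w h.1.length = h.1 ∧ (∀ i, h.2 = some i → (w h.1.length).1 = i) ∧
       ∀ n, h.1.length ≤ n → (w n).2 = σ (wpref w n) (w n).1}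

/-- Even histories extending the finite history `b`, following `σ` and `τ`. -/
def extH (σ : List (I × O) → I → O) (τ : List (I × O) → I)
    (b : List (I × O)) : ℕ → List (I × O)
  | 0 => b
  | n+1 =>
      let g := extH σ τ b n
      g ++ [(τ g, σ g (τ g))]

/-- The unique word extending `b` and following `σ` and `τ` afterwards. -/
def extPlay (σ : List (I × O) → I → O) (τ : List (I × O) → I)
    (b : List (I × O)) : ℕ → I × O := fun n =>
  if hn : n < b.length then b.get ⟨n, hn⟩
  else
    let g := extH σ τ b (n - b.length)
    (τ g, σ g (τ g))

/-- The even history obtained from the general history `h`, letting `σ` answer a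
pending input letter if there is one. -/
def histBase (σ : List (I × O) → I → O) (h : List (I × O) × Option I) :
    List (I × O) :=
  match h.2 with
  | none => h.1
  | some i => h.1 ++ [(i, σ h.1 i)]

/-- `Out_h(σ, τ)`: the unique word extending `h`, following `σ` and `τ` afterwards. -/
def playFrom (σ : List (I × O) → I → O) (τ : List (I × O) → I)
    (h : List (I × O) × Option I) : ℕ → I × O :=
  extPlay σ τ (histBase σ h)

/-- `σ` is strongly winning for `L`. -/
def StronglyWinning (L : Set (ℕ → I × O)) (σ : List (I × O) → I → O) : Prop :=
  ∀ h : List (I × O) × Option I,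
    (∃ σ' : List (I × O) → I → O, (OutC σ' ∩ cylH h).Nonempty ∧ OutC σ' ∩ cylH h ⊆ L) →
    OutC σ ∩ cylH h ⊆ L

/-- `σ` is subgame winning for `L`. -/
def SubgameWinning (L : Set (ℕ → I × O)) (σ : List (I × O) → I → O) : Prop :=
  ∀ h : List (I × O) × Option I,
    (∃ σ' : List (I × O) → I → O, OutFrom σ' h ⊆ L) → OutFrom σ h ⊆ L

/-- `IA(σ) = { w | π_I(w) ∉ π_I(Out(σ) \ L) }`. -/
def IA (L : Set (ℕ → I × O)) (σ : List (I × O) → I → O) : Set (ℕ → I × O) :=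
  {w | ¬ ∃ w' ∈ OutC σ \ L, inputProj w' = inputProj w}

/-- `σ` is remorsefree admissible for `L`. -/
def RemorsefreeAdmissible (L : Set (ℕ → I × O))
    (σ : List (I × O) → I → O) : Prop :=
  ∀ σ' : List (I × O) → I → O,
    (∀ u : ℕ → I, playI σ' u ∈ L → playI σ u ∈ L) ∨
    (∃ u : ℕ → I, playI σ u ∈ L ∧ playI σ' u ∉ L)

/-- `A` is an optimal input assumption for `L`. -/
def OptimalInput (L A : Set (ℕ → I × O)) : Prop :=
  IsInputAssumption A ∧ Sufficient L A ∧
    ∀ B : Set (ℕ → I × O), IsInputAssumption B → Sufficient L B → ¬ A ⊂ B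

lemma wpref_succ (w : ℕ → I × O) (n : ℕ) :
    wpref w (n + 1) = wpref w n ++ [w n] := by
  simp [wpref, List.range_succ]

lemma wpref_playI (σ : List (I × O) → I → O) (u : ℕ → I) (n : ℕ) :
    wpref (playI σ u) n = playIH σ u n := by
  induction n with
  | zero => simp [wpref, playIH]
  | succ n ih => rw [wpref_succ, ih]; rfl

lemma playI_mem_OutC (σ : List (I × O) → I → O) (u : ℕ → I) :
    playI σ u ∈ OutC σ := by
  intro n; show (playI σ u n).2 = _; rw [wpref_playI]; rfl

lemma outC_eq_playI (σ : List (I × O) → I → O) {w : ℕ → I × O}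
    (hw : w ∈ OutC σ) : w = playI σ (inputProj w) := by
  have h : ∀ n, wpref w n = playIH σ (inputProj w) n := by
    intro n
    induction n with
    | zero => simp [wpref, playIH]
    | succ n ih =>
        rw [wpref_succ, ih]
        show _ = playIH σ (inputProj w) n ++ [(inputProj w n, _)]
        rw [← ih]
        congr 1
        exact congrArg (fun x => [x]) (Prod.ext rfl (hw n))
  funext n
  show w n = (inputProj w n, σ (playIH σ (inputProj w) n) (inputProj w n))
  rw [← h n]
  exact Prod.ext rfl (hw n)

lemma mem_IA_iff (L : Set (ℕ → I × O)) (σ : List (I × O) → I → O)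
    (w : ℕ → I × O) : w ∈ IA L σ ↔ playI σ (inputProj w) ∈ L := by
  constructor
  · intro h
    by_contra hL
    exact h ⟨playI σ (inputProj w), ⟨playI_mem_OutC σ _, hL⟩, rfl⟩
  · rintro hL ⟨w', ⟨hw', hw'L⟩, hproj⟩
    exact hw'L (by rw [outC_eq_playI σ hw', hproj]; exact hL)

lemma IA_isInputAssumption (L : Set (ℕ → I × O)) (σ : List (I × O) → I → O) :
    IsInputAssumption (IA L σ) := by
  intro w w' h hw
  rw [mem_IA_iff] at hw ⊢
  rw [← h]; exact hw

lemma outC_inter_IA_subset (L : Set (ℕ → I × O)) (σ : List (I × O) → I → O) :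
    OutC σ ∩ IA L σ ⊆ L := by
  rintro w ⟨hw, hia⟩
  rw [mem_IA_iff] at hia
  rw [outC_eq_playI σ hw]; exact hia

/-- `IA` of a remorsefree-admissible strategy is an optimal input
assumption for `L`, and every optimal input assumption arises this way. -/
theorem remorsefree_admissible_optimal_input (L : Set (ℕ → I × O)) :
    (∀ σ : List (I × O) → I → O, RemorsefreeAdmissible L σ →
      IsInputAssumption (IA L σ) ∧ OutC σ ∩ IA L σ ⊆ L ∧ OptimalInput L (IA L σ)) ∧
    (∀ A : Set (ℕ → I × O), OptimalInput L A →
      ∃ σ : List (I × O) → I → O, RemorsefreeAdmissible L σ ∧ A = IA L σ) := by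
  constructor
  · intro σ hRF
    refine ⟨IA_isInputAssumption L σ, outC_inter_IA_subset L σ,
      IA_isInputAssumption L σ, ⟨σ, outC_inter_IA_subset L σ⟩, ?_⟩
    intro B hB hBsuff hss
    obtain ⟨σ', hσ'⟩ := hBsuff
    obtain ⟨w, hwB, hwIA⟩ := Set.exists_of_ssubset hss
    rw [mem_IA_iff] at hwIA
    rcases hRF σ' with h1 | ⟨u', hu'1, hu'2⟩
    · have hmem : playI σ' (inputProj w) ∈ B := hB w _ rfl hwB
      exact hwIA (h1 _ (hσ' ⟨playI_mem_OutC σ' _, hmem⟩))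
    · have hIA : playI σ u' ∈ IA L σ := by rw [mem_IA_iff]; exact hu'1
      have hmem : playI σ' u' ∈ B := hB (playI σ u') _ rfl (hss.1 hIA)
      exact hu'2 (hσ' ⟨playI_mem_OutC σ' _, hmem⟩)
  · rintro A ⟨hA, ⟨σ, hσ⟩, hmax⟩
    have hsub : A ⊆ IA L σ := by
      intro w hw
      rw [mem_IA_iff]
      exact hσ ⟨playI_mem_OutC σ _, hA w _ rfl hw⟩
    have hAeq : A = IA L σ := by
      by_contra hne
      exact hmax (IA L σ) (IA_isInputAssumption L σ) ⟨σ, outC_inter_IA_subset L σ⟩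
        (Set.ssubset_iff_subset_ne.mpr ⟨hsub, hne⟩)
    refine ⟨σ, ?_, hAeq⟩
    intro σ''
    by_contra h
    push_neg at h
    obtain ⟨⟨u₀, hu₀L, hu₀nL⟩, h2⟩ := h
    have hsub2 : A ⊆ IA L σ'' := by
      intro w hw
      rw [mem_IA_iff]
      have := hsub hw
      rw [mem_IA_iff] at this
      exact h2 _ this
    have hAeq2 : A = IA L σ'' := by
      by_contra hne
      exact hmax (IA L σ'') (IA_isInputAssumption L σ'')
        ⟨σ'', outC_inter_IA_subset L σ''⟩
        (Set.ssubset_iff_subset_ne.mpr ⟨hsub2, hne⟩)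
    have hmem : playI σ'' u₀ ∈ IA L σ'' := by rw [mem_IA_iff]; exact hu₀L
    rw [← hAeq2, hAeq, mem_IA_iff] at hmem
    exact hu₀nL hmem
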